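/- The set Split(Φ) := {⟨a⟩⊤, ⟨b⟩⊤, [a∩b]⊥} ∪ {[a]φ | φ ∈ Φ} ∪ {[b]φ | φ ∈ Φ} is satisfiable whenever Φ is satisfiable: if A,v ⊨ Φ, then the pointed structure consisting of a fresh root with an a-edge to the root of one disjoint copy of (A,v) and a b-edge to the root of a second disjoint copy of (A,v) satisfies Split(Φ). -/
import Mathlib


mutual
inductive Formula (P R : Type) : Type
  | atom : P → Formula P R
  | tt : Formula P R
  | or : Formula P R → Formula P R → Formula P R
  | neg : Formula P R → Formula P R
  | dia : Program P R → Formula P R → Formula P R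
inductive Program (P R : Type) : Type
  | atom : R → Program P R
  | seq : Program P R → Program P R → Program P R
  | union : Program P R → Program P R → Program P R
  | inter : Program P R → Program P R → Program P R
  | test : Formula P R → Program P R
end

structure Kripke (P R W : Type) where
  val : P → W → Prop
  rel : R → W → W → Prop

mutual
def Sat {P R W : Type} (A : Kripke P R W) : W → Formula P R → Prop
  | u, .atom p => A.val p u
  | _, .tt => True
  | u, .or φ ψ => Sat A u φ ∨ Sat A u ψ
  | u, .neg φ => ¬ Sat A u φ
  | u, .dia α φ => ∃ v, PRel A α u v ∧ Sat A v φ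
def PRel {P R W : Type} (A : Kripke P R W) : Program P R → W → W → Prop
  | .atom a, u, v => A.rel a u v
  | .seq α β, u, v => ∃ w, PRel A α u w ∧ PRel A β w v
  | .union α β, u, v => PRel A α u v ∨ PRel A β u v
  | .inter α β, u, v => PRel A α u v ∧ PRel A β u v
  | .test φ, u, v => u = v ∧ Sat A u φ
end

def Formula.ff {P R : Type} : Formula P R := .neg .tt
def Formula.conj {P R : Type} (φ ψ : Formula P R) : Formula P R := .neg (.or (.neg φ) (.neg ψ))
def Formula.imp {P R : Type} (φ ψ : Formula P R) : Formula P R := .or (.neg φ) ψ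
def Formula.iff {P R : Type} (φ ψ : Formula P R) : Formula P R := (φ.imp ψ).conj (ψ.imp φ)
def Formula.box {P R : Type} (α : Program P R) (φ : Formula P R) : Formula P R := .neg (.dia α (.neg φ))
def Program.loop {P R : Type} (α : Program P R) : Program P R := .inter α (.test .tt)

/-- The structure consisting of a fresh root `none` together with two disjoint tagged
copies of `A`, with an `a`-edge from the root to the copy of `v` in the `false`-copy and
a `b`-edge from the root to the copy of `v` in the `true`-copy. -/
def SplitModel {P R W : Type} (A : Kripke P R W) (v : W) (a b : R) :
    Kripke P R (Option (Bool × W)) where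
  val p w := match w with
    | none => False
    | some (_, x) => A.val p x
  rel c w w' := match w, w' with
    | none, some (i, x) => x = v ∧ ((i = false ∧ c = a) ∨ (i = true ∧ c = b))
    | some (i, x), some (j, y) => i = j ∧ A.rel c x y
    | _, _ => False

mutual
theorem sat_copy {P R W : Type} (A : Kripke P R W) (v : W) (a b : R) (i : Bool) :
    ∀ (φ : Formula P R) (x : W),
      Sat (SplitModel A v a b) (some (i, x)) φ ↔ Sat A x φ
  | .atom p, x => Iff.rfl
  | .tt, x => Iff.rfl
  | .or φ ψ, x => by
      simp only [Sat, sat_copy A v a b i φ x, sat_copy A v a b i ψ x]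
  | .neg φ, x => by
      simp only [Sat, sat_copy A v a b i φ x]
  | .dia α φ, x => by
      simp only [Sat]
      constructor
      · rintro ⟨w, hw, hs⟩
        obtain ⟨y, rfl, hy⟩ := (prel_copy A v a b i α x w).mp hw
        exact ⟨y, hy, (sat_copy A v a b i φ y).mp hs⟩
      · rintro ⟨y, hy, hs⟩
        exact ⟨some (i, y), (prel_copy A v a b i α x _).mpr ⟨y, rfl, hy⟩,
          (sat_copy A v a b i φ y).mpr hs⟩

theorem prel_copy {P R W : Type} (A : Kripke P R W) (v : W) (a b : R) (i : Bool) :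
    ∀ (α : Program P R) (x : W) (w : Option (Bool × W)),
      PRel (SplitModel A v a b) α (some (i, x)) w ↔
        ∃ y, w = some (i, y) ∧ PRel A α x y
  | .atom c, x, w => by
      cases w with
      | none => simp [PRel, SplitModel]
      | some p =>
        obtain ⟨j, y⟩ := p
        simp only [PRel, SplitModel]
        constructor
        · rintro ⟨rfl, h⟩; exact ⟨y, rfl, h⟩
        · rintro ⟨z, hz, h⟩
          obtain ⟨rfl, rfl⟩ : j = i ∧ z = y := by
            simpa [eq_comm, And.comm] using hz
          exact ⟨rfl, h⟩
  | .seq α β, x, w => by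
      simp only [PRel]
      constructor
      · rintro ⟨u, hu, hv⟩
        obtain ⟨y, rfl, hy⟩ := (prel_copy A v a b i α x u).mp hu
        obtain ⟨z, rfl, hz⟩ := (prel_copy A v a b i β y w).mp hv
        exact ⟨z, rfl, y, hy, hz⟩
      · rintro ⟨z, rfl, y, hy, hz⟩
        exact ⟨some (i, y), (prel_copy A v a b i α x _).mpr ⟨y, rfl, hy⟩,
          (prel_copy A v a b i β y _).mpr ⟨z, rfl, hz⟩⟩
  | .union α β, x, w => by
      simp only [PRel, prel_copy A v a b i α x w, prel_copy A v a b i β x w]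
      constructor
      · rintro (⟨y, rfl, hy⟩ | ⟨y, rfl, hy⟩)
        · exact ⟨y, rfl, Or.inl hy⟩
        · exact ⟨y, rfl, Or.inr hy⟩
      · rintro ⟨y, rfl, hy | hy⟩
        · exact Or.inl ⟨y, rfl, hy⟩
        · exact Or.inr ⟨y, rfl, hy⟩
  | .inter α β, x, w => by
      simp only [PRel, prel_copy A v a b i α x w, prel_copy A v a b i β x w]
      constructor
      · rintro ⟨⟨y, rfl, hy⟩, ⟨z, hz, hz'⟩⟩
        obtain ⟨rfl⟩ : z = y := by simpa [eq_comm] using hz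
        exact ⟨y, rfl, hy, hz'⟩
      · rintro ⟨y, rfl, hy, hz⟩
        exact ⟨⟨y, rfl, hy⟩, ⟨y, rfl, hz⟩⟩
  | .test φ, x, w => by
      simp only [PRel, sat_copy A v a b i φ x]
      constructor
      · rintro ⟨rfl, h⟩; exact ⟨x, rfl, rfl, h⟩
      · rintro ⟨y, rfl, rfl, h⟩; exact ⟨rfl, h⟩
end

theorem stmt9 {P R W : Type} (A : Kripke P R W) (v : W) (a b : R) (hab : a ≠ b)
    (Φ : Set (Formula P R)) (hΦ : ∀ φ ∈ Φ, Sat A v φ) :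
    Sat (SplitModel A v a b) none (.dia (.atom a) .tt) ∧
    Sat (SplitModel A v a b) none (.dia (.atom b) .tt) ∧
    Sat (SplitModel A v a b) none (Formula.box (.inter (.atom a) (.atom b)) .ff) ∧
    (∀ φ ∈ Φ, Sat (SplitModel A v a b) none (Formula.box (.atom a) φ) ∧
              Sat (SplitModel A v a b) none (Formula.box (.atom b) φ)) := by
  refine ⟨⟨some (false, v), ⟨rfl, Or.inl ⟨rfl, rfl⟩⟩, trivial⟩,
    ⟨some (true, v), ⟨rfl, Or.inr ⟨rfl, rfl⟩⟩, trivial⟩, ?_, ?_⟩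
  · rintro ⟨w, ⟨ha, hb⟩, -⟩
    cases w with
    | none => exact ha
    | some p =>
      obtain ⟨i, x⟩ := p
      obtain ⟨-, (⟨rfl, -⟩ | ⟨rfl, h⟩)⟩ := ha
      · obtain ⟨-, (⟨-, h⟩ | ⟨h, -⟩)⟩ := hb
        · exact hab h.symm
        · exact Bool.noConfusion h
      · exact hab h
  · intro φ hφ
    constructor
    all_goals rintro ⟨w, hw, hs⟩
    · cases w with
      | none => exact hw
      | some p =>
        obtain ⟨i, x⟩ := p
        obtain ⟨hx, (⟨rfl, -⟩ | ⟨rfl, h⟩)⟩ := hw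
        · subst hx
          exact hs ((sat_copy A _ a b false φ _).mpr (hΦ φ hφ))
        · exact hab h
    · cases w with
      | none => exact hw
      | some p =>
        obtain ⟨i, x⟩ := p
        obtain ⟨hx, (⟨rfl, h⟩ | ⟨rfl, -⟩)⟩ := hw
        · exact hab h.symm
        · subst hx
          exact hs ((sat_copy A _ a b true φ _).mpr (hΦ φ hφ))
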